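/- arXiv:1906.02149 — 4 statements merged into one kernel-verified Lean document; each statement's English description precedes it below -/
import Mathlib

section
/- A restriction semigroup S is proper if and only if the relations σ and ∼ coincide, i.e., for all s, t ∈ S: s σ t if and only if s ∼ t. (Since s ∼ t always implies s σ t, this is equivalent to: s σ t implies s ∼ t.) -/
/-- A (two-sided) restriction semigroup: a semigroup with unary operations
`rstar` (`x ↦ x^*`) and `rplus` (`x ↦ x^+`) satisfying the standard identities. -/
class RestrictionSemigroup (S : Type*) extends Semigroup S where
  rstar : S → S
  rplus : S → S
  rplus_mul_self : ∀ x : S, rplus x * x = x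
  rplus_comm : ∀ x y : S, rplus x * rplus y = rplus y * rplus x
  rplus_rplus_mul : ∀ x y : S, rplus (rplus x * y) = rplus x * rplus y
  mul_rplus : ∀ x y : S, rplus (x * y) * x = x * rplus y
  mul_rstar_self : ∀ x : S, x * rstar x = x
  rstar_comm : ∀ x y : S, rstar x * rstar y = rstar y * rstar x
  rstar_mul_rstar : ∀ x y : S, rstar (x * rstar y) = rstar x * rstar y
  rstar_mul : ∀ x y : S, y * rstar (x * y) = rstar x * y
  rstar_rplus : ∀ x : S, rstar (rplus x) = rplus x
  rplus_rstar : ∀ x : S, rplus (rstar x) = rstar x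

open RestrictionSemigroup

/-- `e` is a projection: `e ∈ P(S) = {s^* : s ∈ S}`. -/
def IsProj {S : Type*} [RestrictionSemigroup S] (e : S) : Prop :=
  ∃ s : S, rstar s = e

/-- The natural partial order: `s ≤ t` iff `s = t f` for some projection `f`. -/
def rle {S : Type*} [RestrictionSemigroup S] (s t : S) : Prop :=
  ∃ f : S, IsProj f ∧ s = t * f

/-- Compatibility: `s ∼ t` iff `s t^* = t s^*` and `t^+ s = s^+ t`. -/
def compat {S : Type*} [RestrictionSemigroup S] (s t : S) : Prop :=
  s * rstar t = t * rstar s ∧ rplus t * s = rplus s * t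

/-- The relation σ: `s σ t` iff `e s = e t` for some projection `e`. -/
def sigmaR {S : Type*} [RestrictionSemigroup S] (s t : S) : Prop :=
  ∃ e : S, IsProj e ∧ e * s = e * t

/-- A restriction semigroup is proper if σ-related elements with equal `^*`
(resp. equal `^+`) are equal. -/
def ProperRS (S : Type*) [RestrictionSemigroup S] : Prop :=
  (∀ s t : S, rstar s = rstar t → sigmaR s t → s = t) ∧
    (∀ s t : S, rplus s = rplus t → sigmaR s t → s = t)

/-! If `e s = e t` for a projection `e`, then `e` also equalises `s t^*` and `t s^*`
(both become `e t`), and likewise `t^+ s` and `s^+ t`, while each of these pairs has equal `^*`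
(resp. `^+`). Properness therefore forces the two compatibility equations. Conversely, compatible
elements with equal `^*` (resp. `^+`) are equal, and compatible elements are σ-related via the
projection `s^+ t^+`. -/

namespace RestrictionSemigroup

variable {S : Type*} [RestrictionSemigroup S]

lemma rstar_rstar (x : S) : rstar (rstar x) = rstar x := by
  calc rstar (rstar x) = rstar (rplus (rstar x)) := by rw [rplus_rstar]
    _ = rplus (rstar x) := rstar_rplus _
    _ = rstar x := rplus_rstar _

lemma isProj_rplus (t : S) : IsProj (rplus t) := ⟨rplus t, rstar_rplus t⟩

lemma rstar_mul_rstar_comm (s t : S) : rstar (s * rstar t) = rstar (t * rstar s) := by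
  rw [rstar_mul_rstar, rstar_mul_rstar, rstar_comm]

lemma rplus_rplus_mul_comm (s t : S) : rplus (rplus t * s) = rplus (rplus s * t) := by
  rw [rplus_rplus_mul, rplus_rplus_mul, rplus_comm]

end RestrictionSemigroup

section

variable {S : Type*} [RestrictionSemigroup S]

namespace IsProj

lemma rstar_eq {e : S} (he : IsProj e) : rstar e = e := by
  obtain ⟨s, rfl⟩ := he
  exact rstar_rstar s

lemma mul_self {e : S} (he : IsProj e) : e * e = e := by
  calc e * e = e * rstar e := by rw [he.rstar_eq]
    _ = e := mul_rstar_self e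

lemma commute {e f : S} (he : IsProj e) (hf : IsProj f) : Commute e f := by
  rw [Commute, SemiconjBy, ← he.rstar_eq, ← hf.rstar_eq, rstar_comm]

lemma mul {e f : S} (he : IsProj e) (hf : IsProj f) : IsProj (e * f) := by
  refine ⟨e * f, ?_⟩
  conv_lhs => rw [← hf.rstar_eq]
  rw [rstar_mul_rstar, he.rstar_eq, hf.rstar_eq]

end IsProj

namespace sigmaR

lemma symm {s t : S} (h : sigmaR s t) : sigmaR t s := by
  obtain ⟨e, he, hst⟩ := h
  exact ⟨e, he, hst.symm⟩

lemma trans {s t u : S} (h₁ : sigmaR s t) (h₂ : sigmaR t u) : sigmaR s u := by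
  obtain ⟨e, he, hst⟩ := h₁
  obtain ⟨f, hf, htu⟩ := h₂
  refine ⟨e * f, he.mul hf, ?_⟩
  rw [(he.commute hf).eq, mul_assoc, hst, ← mul_assoc, ← (he.commute hf).eq, mul_assoc, htu,
    ← mul_assoc]

lemma mul_rstar_left {s t : S} (h : sigmaR s t) : sigmaR (s * rstar t) t := by
  obtain ⟨e, he, hst⟩ := h
  refine ⟨e, he, ?_⟩
  rw [← mul_assoc, hst, mul_assoc, mul_rstar_self]

lemma rplus_mul_left {s t : S} (h : sigmaR s t) : sigmaR (rplus t * s) t := by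
  obtain ⟨e, he, hst⟩ := h
  have hcomm := (he.commute (isProj_rplus t)).eq
  refine ⟨e, he, ?_⟩
  rw [← mul_assoc, hcomm, mul_assoc, hst, ← mul_assoc, ← hcomm, mul_assoc, rplus_mul_self]

lemma mul_rstar_cross {s t : S} (h : sigmaR s t) : sigmaR (s * rstar t) (t * rstar s) :=
  h.mul_rstar_left.trans (h.symm.mul_rstar_left.trans h).symm

lemma rplus_mul_cross {s t : S} (h : sigmaR s t) : sigmaR (rplus t * s) (rplus s * t) :=
  h.rplus_mul_left.trans (h.symm.rplus_mul_left.trans h).symm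

lemma compat_of_properRS (hS : ProperRS S) {s t : S} (h : sigmaR s t) : compat s t :=
  ⟨hS.1 _ _ (rstar_mul_rstar_comm s t) h.mul_rstar_cross,
    hS.2 _ _ (rplus_rplus_mul_comm s t) h.rplus_mul_cross⟩

end sigmaR

namespace compat

lemma sigmaR {s t : S} (h : compat s t) : sigmaR s t := by
  refine ⟨rplus s * rplus t, (isProj_rplus s).mul (isProj_rplus t), ?_⟩
  rw [mul_assoc, h.2, ← mul_assoc, (isProj_rplus s).mul_self, mul_assoc, rplus_mul_self]

lemma eq_of_rstar_eq {s t : S} (h : compat s t) (hst : rstar s = rstar t) : s = t := by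
  calc s = s * rstar t := by rw [← hst, mul_rstar_self]
    _ = t * rstar s := h.1
    _ = t := by rw [hst, mul_rstar_self]

lemma eq_of_rplus_eq {s t : S} (h : compat s t) (hst : rplus s = rplus t) : s = t := by
  calc s = rplus t * s := by rw [← hst, rplus_mul_self]
    _ = rplus s * t := h.2
    _ = t := by rw [hst, rplus_mul_self]

end compat

end

theorem stmt5 {S : Type*} [RestrictionSemigroup S] :
    ProperRS S ↔ ∀ s t : S, sigmaR s t ↔ compat s t := by
  refine ⟨fun hS s t => ⟨fun h => h.compat_of_properRS hS, compat.sigmaR⟩, fun h => ?_⟩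
  exact ⟨fun s t hst hσ => ((h s t).1 hσ).eq_of_rstar_eq hst,
    fun s t hst hσ => ((h s t).1 hσ).eq_of_rplus_eq hst⟩
end

section
/- Let S and T be inverse semigroups, regarded as restriction semigroups, and let φ: S → T be a premorphism. The following are equivalent: (1) φ satisfies (Sr): φ(s)φ(t) = φ(st)φ(t)^* for all s, t ∈ S; (2) φ satisfies (Sl): φ(s)φ(t) = φ(s)^+ φ(st) for all s, t ∈ S; (3) φ is strong, i.e., satisfies both (Sr) and (Sl). -/
/-- An inverse semigroup: each element has a unique (von Neumann) inverse. -/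
class InverseSemigroup (S : Type*) extends Semigroup S where
  inv : S → S
  mul_inv_mul : ∀ a : S, a * inv a * a = a
  inv_mul_inv : ∀ a : S, inv a * a * inv a = inv a
  inv_unique : ∀ a b : S, a * b * a = a → b * a * b = b → b = inv a

/-- `s^* = s⁻¹ s` when an inverse semigroup is regarded as a restriction semigroup. -/
def istar {S : Type*} [InverseSemigroup S] (s : S) : S := InverseSemigroup.inv s * s

/-- `s^+ = s s⁻¹` when an inverse semigroup is regarded as a restriction semigroup. -/
def iplus {S : Type*} [InverseSemigroup S] (s : S) : S := s * InverseSemigroup.inv s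

/-- `e ∈ P(S) = {s^* : s ∈ S}` for an inverse semigroup. -/
def iIsProj {S : Type*} [InverseSemigroup S] (e : S) : Prop := ∃ s : S, istar s = e

/-- The natural partial order on an inverse semigroup regarded as a restriction semigroup. -/
def ile {S : Type*} [InverseSemigroup S] (s t : S) : Prop :=
  ∃ f : S, iIsProj f ∧ s = t * f

/-!
Assuming (Sr), the map `φ` sends idempotents to idempotents, satisfies `φ(s)⁻¹ ≤ φ(s⁻¹)` (by PM2)
and is monotone for the natural order. Hence
`φ(s)⁺ φ(st) = φ(s) φ(s)⁻¹ φ(st) ≤ φ(s) φ(s⁻¹) φ(st) ≤ φ(s) φ(s⁻¹st) ≤ φ(s) φ(t)`,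
while `φ(s) φ(t) ≤ φ(s)⁺ φ(st)` holds for every premorphism by PM1; antisymmetry gives (Sl).
The converse is the same argument in the opposite semigroups, where (Sl) reads as (Sr) and PM3 as
PM2. This needs the natural order to be definable by left as well as by right multiplication with
idempotents, which holds because idempotents commute.
-/

open MulOpposite

namespace InverseSemigroup

variable {S : Type*} [InverseSemigroup S]

theorem inv_inv (a : S) : inv (inv a) = a :=
  (inv_unique (inv a) a (inv_mul_inv a) (mul_inv_mul a)).symm

theorem mul_istar (a : S) : a * istar a = a := by
  rw [istar, ← mul_assoc, mul_inv_mul]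

theorem mul_inv_mul_mul (a b : S) : a * (inv a * (a * b)) = a * b := by
  rw [← mul_assoc, ← mul_assoc, mul_inv_mul]

theorem inv_mul_inv_mul (a b : S) : inv a * (a * (inv a * b)) = inv a * b := by
  rw [← mul_assoc, ← mul_assoc, inv_mul_inv]

theorem isIdempotentElem_istar (a : S) : IsIdempotentElem (istar a) := by
  rw [IsIdempotentElem, istar, mul_assoc, ← mul_assoc a, mul_inv_mul]

theorem isIdempotentElem_iplus (a : S) : IsIdempotentElem (iplus a) := by
  rw [IsIdempotentElem, iplus, mul_assoc, ← mul_assoc (inv a), inv_mul_inv]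

theorem inv_eq_self_of_isIdempotentElem {e : S} (he : IsIdempotentElem e) : inv e = e :=
  (inv_unique e e (by rw [he.eq, he.eq]) (by rw [he.eq, he.eq])).symm

theorem istar_eq_self_of_isIdempotentElem {e : S} (he : IsIdempotentElem e) : istar e = e := by
  rw [istar, inv_eq_self_of_isIdempotentElem he, he.eq]

theorem isIdempotentElem_mul {e f : S} (he : IsIdempotentElem e) (hf : IsIdempotentElem f) :
    IsIdempotentElem (e * f) := by
  set x := inv (e * f)
  have hxefx : x * (e * f) * x = x := inv_mul_inv _
  -- `f * x * e` is an inverse of `e * f`, hence equal to `x`; so `x` is idempotent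
  have hx : x = f * x * e := by
    refine (inv_unique (e * f) (f * x * e) ?_ ?_).symm
    · calc e * f * (f * x * e) * (e * f) = e * f * x * (e * f) := by
            simp only [mul_assoc, he.mul_self_mul, hf.mul_self_mul]
        _ = e * f := mul_inv_mul _
    · calc f * x * e * (e * f) * (f * x * e) = f * (x * (e * f) * x) * e := by
            simp only [mul_assoc, he.mul_self_mul, hf.mul_self_mul]
        _ = f * x * e := by rw [hxefx]
  have hxx : IsIdempotentElem x := by
    calc x * x = f * (x * (e * f) * x) * e := by
          nth_rw 1 [hx]; nth_rw 2 [hx]; simp only [mul_assoc]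
      _ = x := by rw [hxefx, ← hx]
  rwa [← inv_inv (e * f), inv_eq_self_of_isIdempotentElem hxx]

theorem commute_of_isIdempotentElem {e f : S} (he : IsIdempotentElem e)
    (hf : IsIdempotentElem f) : Commute e f := by
  have hef := isIdempotentElem_mul he hf
  have hfe := isIdempotentElem_mul hf he
  have h := inv_unique (e * f) (f * e)
    (by simpa only [mul_assoc, he.mul_self_mul, hf.mul_self_mul] using hef.eq)
    (by simpa only [mul_assoc, he.mul_self_mul, hf.mul_self_mul] using hfe.eq)
  rw [inv_eq_self_of_isIdempotentElem hef] at h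
  exact h.symm

theorem inv_mul (a b : S) : inv (a * b) = inv b * inv a := by
  have hc : b * inv b * (inv a * a) = inv a * a * (b * inv b) :=
    commute_of_isIdempotentElem (isIdempotentElem_iplus b) (isIdempotentElem_istar a)
  refine (inv_unique (a * b) (inv b * inv a) ?_ ?_).symm
  · calc a * b * (inv b * inv a) * (a * b) = a * (b * inv b * (inv a * a)) * b := by
          simp only [mul_assoc]
      _ = a * inv a * a * (b * inv b * b) := by rw [hc]; simp only [mul_assoc]
      _ = a * b := by rw [mul_inv_mul, mul_inv_mul]
  · calc inv b * inv a * (a * b) * (inv b * inv a) = inv b * (inv a * a * (b * inv b)) * inv a := by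
          simp only [mul_assoc]
      _ = inv b * b * inv b * (inv a * a * inv a) := by rw [← hc]; simp only [mul_assoc]
      _ = inv b * inv a := by rw [inv_mul_inv, inv_mul_inv]

theorem iIsProj_iff {e : S} : iIsProj e ↔ IsIdempotentElem e :=
  ⟨fun ⟨s, hs⟩ => hs ▸ isIdempotentElem_istar s,
    fun he => ⟨e, istar_eq_self_of_isIdempotentElem he⟩⟩

theorem ile_iff_exists_mul_idem {x y : S} : ile x y ↔ ∃ e, IsIdempotentElem e ∧ x = y * e := by
  simp only [ile, iIsProj_iff]

theorem ile_mul_idem (y : S) {e : S} (he : IsIdempotentElem e) : ile (y * e) y :=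
  ile_iff_exists_mul_idem.2 ⟨e, he, rfl⟩

theorem ile_idem_mul {e : S} (he : IsIdempotentElem e) (y : S) : ile (e * y) y := by
  have hc : e * (y * inv y) = y * inv y * e :=
    commute_of_isIdempotentElem he (isIdempotentElem_iplus y)
  refine ile_iff_exists_mul_idem.2 ⟨inv y * e * y, ?_, ?_⟩
  · calc inv y * e * y * (inv y * e * y) = inv y * (e * (y * inv y)) * e * y := by
          simp only [mul_assoc]
      _ = inv y * e * y := by rw [hc]; simp only [mul_assoc, he.mul_self_mul, inv_mul_inv_mul]
  · calc e * y = e * (y * inv y) * y := by rw [mul_assoc e, mul_inv_mul]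
      _ = y * (inv y * e * y) := by rw [hc]; simp only [mul_assoc]

theorem ile_iff_exists_idem_mul {x y : S} : ile x y ↔ ∃ e, IsIdempotentElem e ∧ x = e * y := by
  refine ⟨fun h => ?_, fun ⟨e, he, hx⟩ => hx ▸ ile_idem_mul he y⟩
  obtain ⟨f, hf, rfl⟩ := ile_iff_exists_mul_idem.1 h
  have hc : f * (inv y * y) = inv y * y * f :=
    commute_of_isIdempotentElem hf (isIdempotentElem_istar y)
  refine ⟨y * f * inv y, ?_, ?_⟩
  · calc y * f * inv y * (y * f * inv y) = y * (f * (inv y * y)) * f * inv y := by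
          simp only [mul_assoc]
      _ = y * f * inv y := by rw [hc]; simp only [mul_assoc, hf.mul_self_mul, mul_inv_mul_mul]
  · calc y * f = y * (inv y * y * f) := by rw [mul_assoc, mul_inv_mul_mul]
      _ = y * f * inv y * y := by rw [← hc]; simp only [mul_assoc]

theorem ile_iff_eq_mul_istar {x y : S} : ile x y ↔ x = y * istar x := by
  refine ⟨fun h => ?_, fun h => h ▸ ile_mul_idem y (isIdempotentElem_istar x)⟩
  obtain ⟨f, hf, rfl⟩ := ile_iff_exists_mul_idem.1 h
  have hc : f * (inv y * y) = inv y * y * f :=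
    commute_of_isIdempotentElem hf (isIdempotentElem_istar y)
  calc y * f = y * (inv y * y * f * f) := by rw [hf.mul_mul_self, mul_assoc, mul_inv_mul_mul]
    _ = y * (f * (inv y * y) * f) := by rw [hc]
    _ = y * istar (y * f) := by
      rw [istar, inv_mul, inv_eq_self_of_isIdempotentElem hf]; simp only [mul_assoc]

theorem mul_eq_of_ile_of_isIdempotentElem {u v : S} (hv : IsIdempotentElem v) (h : ile u v) :
    v * u = u := by
  obtain ⟨f, -, rfl⟩ := ile_iff_exists_mul_idem.1 h
  exact hv.mul_self_mul f

theorem ile_trans {x y z : S} (hxy : ile x y) (hyz : ile y z) : ile x z := by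
  obtain ⟨f, hf, rfl⟩ := ile_iff_exists_mul_idem.1 hxy
  obtain ⟨g, hg, rfl⟩ := ile_iff_exists_mul_idem.1 hyz
  exact mul_assoc z g f ▸ ile_mul_idem z (isIdempotentElem_mul hg hf)

instance : @Trans S S S ile ile ile := ⟨ile_trans⟩

theorem ile_antisymm {x y : S} (hxy : ile x y) (hyx : ile y x) : x = y := by
  obtain ⟨f, hf, hx⟩ := ile_iff_exists_mul_idem.1 hxy
  obtain ⟨g, hg, rfl⟩ := ile_iff_exists_mul_idem.1 hyx
  -- `x = x * g * f`, so right multiplication by `g` fixes `x` as `f` and `g` commute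
  calc x = x * g * f := hx
    _ = x * g * f * g := by
      simp only [mul_assoc, (commute_of_isIdempotentElem hf hg).eq, hg.mul_self_mul]
    _ = x * g := by rw [← hx]

theorem ile_mul_left (z : S) {x y : S} (h : ile x y) : ile (z * x) (z * y) := by
  obtain ⟨f, hf, rfl⟩ := ile_iff_exists_mul_idem.1 h
  exact mul_assoc z y f ▸ ile_mul_idem (z * y) hf

theorem ile_mul_right (z : S) {x y : S} (h : ile x y) : ile (x * z) (y * z) := by
  obtain ⟨e, he, rfl⟩ := ile_iff_exists_idem_mul.1 h
  exact (mul_assoc e y z).symm ▸ ile_idem_mul he (y * z)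

instance : InverseSemigroup Sᵐᵒᵖ where
  inv a := op (inv a.unop)
  mul_inv_mul a := unop_injective <| (mul_assoc _ _ _).symm.trans (mul_inv_mul a.unop)
  inv_mul_inv a := unop_injective <| (mul_assoc _ _ _).symm.trans (inv_mul_inv a.unop)
  inv_unique a b h₁ h₂ := unop_injective <| inv_unique a.unop b.unop
    ((mul_assoc _ _ _).trans (congrArg unop h₁)) ((mul_assoc _ _ _).trans (congrArg unop h₂))

theorem isIdempotentElem_op_iff {e : S} : IsIdempotentElem (op e) ↔ IsIdempotentElem e :=
  op_injective.eq_iff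

theorem ile_op_iff {x y : S} : ile (op x) (op y) ↔ ile x y := by
  rw [ile_iff_exists_mul_idem, ile_iff_exists_idem_mul, op_surjective.exists]
  simp only [isIdempotentElem_op_iff, ← op_mul, op_inj]

theorem ile_iplus_mul_of_mul_ile {x y z : S} (h : ile (x * y) z) : ile (x * y) (iplus x * z) := by
  obtain ⟨f, hf, hxy⟩ := ile_iff_exists_mul_idem.1 h
  refine ile_iff_exists_mul_idem.2 ⟨f, hf, ?_⟩
  calc x * y = iplus x * (x * y) := by rw [iplus, mul_assoc, mul_inv_mul_mul]
    _ = iplus x * z * f := by rw [hxy, mul_assoc]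

section Premorphism

variable {T : Type*} [InverseSemigroup T]

/-- Condition (Sr). -/
def IsRightStrong (φ : S → T) : Prop :=
  ∀ s t, φ s * φ t = φ (s * t) * istar (φ t)

/-- Condition (Sl). -/
def IsLeftStrong (φ : S → T) : Prop :=
  ∀ s t, φ s * φ t = iplus (φ s) * φ (s * t)

variable {φ : S → T}

namespace IsRightStrong

theorem isIdempotentElem_map (h : IsRightStrong φ) {e : S} (he : IsIdempotentElem e) :
    IsIdempotentElem (φ e) := by
  have := h e e
  rwa [he.eq, mul_istar] at this

theorem inv_ile_map_inv (hPM2 : ∀ s : S, ile (istar (φ s)) (φ (istar s)))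
    (h : IsRightStrong φ) (s : S) : ile (inv (φ s)) (φ (inv s)) := by
  have habs : φ (istar s) * istar (φ s) = istar (φ s) :=
    mul_eq_of_ile_of_isIdempotentElem (h.isIdempotentElem_map (isIdempotentElem_istar s)) (hPM2 s)
  refine ile_iff_exists_mul_idem.2 ⟨iplus (φ s), isIdempotentElem_iplus _, ?_⟩
  calc inv (φ s) = istar (φ s) * inv (φ s) := (inv_mul_inv _).symm
    _ = φ (istar s) * istar (φ s) * inv (φ s) := by rw [habs]
    _ = φ (inv s) * φ s * inv (φ s) := by rw [h (inv s) s]; rfl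
    _ = φ (inv s) * iplus (φ s) := mul_assoc _ _ _

theorem ile_map (hPM2 : ∀ s : S, ile (istar (φ s)) (φ (istar s))) (h : IsRightStrong φ)
    {u t : S} (hut : ile u t) : ile (φ u) (φ t) := by
  have hu : u = t * istar u := ile_iff_eq_mul_istar.1 hut
  have hidem := h.isIdempotentElem_map (isIdempotentElem_istar u)
  have habs : istar (φ u) * φ (istar u) = istar (φ u) := by
    rw [(commute_of_isIdempotentElem (isIdempotentElem_istar _) hidem).eq]
    exact mul_eq_of_ile_of_isIdempotentElem hidem (hPM2 u)
  refine ile_iff_exists_mul_idem.2 ⟨φ (istar u), hidem, ?_⟩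
  calc φ u = φ u * istar (φ u) * φ (istar u) := by rw [mul_assoc, habs, mul_istar]
    _ = φ (t * istar u) * istar (φ (istar u)) := by
      rw [mul_istar, ← hu, istar_eq_self_of_isIdempotentElem hidem]
    _ = φ t * φ (istar u) := (h t (istar u)).symm

theorem isLeftStrong (hPM1 : ∀ s t : S, ile (φ s * φ t) (φ (s * t)))
    (hPM2 : ∀ s : S, ile (istar (φ s)) (φ (istar s))) (h : IsRightStrong φ) :
    IsLeftStrong φ := by
  intro s t
  refine ile_antisymm (ile_iplus_mul_of_mul_ile (hPM1 s t)) ?_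
  have hinv : ile (inv (φ s) * φ (s * t)) (φ t) :=
    calc ile (inv (φ s) * φ (s * t)) (φ (inv s) * φ (s * t)) :=
          ile_mul_right _ (h.inv_ile_map_inv hPM2 s)
      ile _ (φ (inv s * (s * t))) := hPM1 _ _
      ile _ (φ t) :=
          h.ile_map hPM2 (mul_assoc (inv s) s t ▸ ile_idem_mul (isIdempotentElem_istar s) t)
  calc iplus (φ s) * φ (s * t) = φ s * (inv (φ s) * φ (s * t)) := mul_assoc _ _ _
    ile _ (φ s * φ t) := ile_mul_left _ hinv

end IsRightStrong

theorem isRightStrong_op_iff :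
    IsRightStrong (op ∘ φ ∘ unop) ↔ IsLeftStrong φ :=
  ⟨fun h s t => op_injective (h (op t) (op s)), fun h s t => congrArg op (h t.unop s.unop)⟩

theorem isLeftStrong_op_iff :
    IsLeftStrong (op ∘ φ ∘ unop) ↔ IsRightStrong φ :=
  ⟨fun h s t => op_injective (h (op t) (op s)), fun h s t => congrArg op (h t.unop s.unop)⟩

theorem IsLeftStrong.isRightStrong (hPM1 : ∀ s t : S, ile (φ s * φ t) (φ (s * t)))
    (hPM3 : ∀ s : S, ile (iplus (φ s)) (φ (iplus s))) (h : IsLeftStrong φ) :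
    IsRightStrong φ :=
  isLeftStrong_op_iff.1 <| (isRightStrong_op_iff.2 h).isLeftStrong
    (fun s t => ile_op_iff.2 (hPM1 t.unop s.unop)) (fun s => ile_op_iff.2 (hPM3 s.unop))

end Premorphism

end InverseSemigroup

theorem stmt8 {S T : Type*} [InverseSemigroup S] [InverseSemigroup T]
    (φ : S → T)
    (hPM1 : ∀ s t : S, ile (φ s * φ t) (φ (s * t)))
    (hPM2 : ∀ s : S, ile (istar (φ s)) (φ (istar s)))
    (hPM3 : ∀ s : S, ile (iplus (φ s)) (φ (iplus s))) :
    List.TFAE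
      [∀ s t : S, φ s * φ t = φ (s * t) * istar (φ t),
       ∀ s t : S, φ s * φ t = iplus (φ s) * φ (s * t),
       (∀ s t : S, φ s * φ t = φ (s * t) * istar (φ t)) ∧
         (∀ s t : S, φ s * φ t = iplus (φ s) * φ (s * t))] := by
  tfae_have 1 → 3 := fun h => ⟨h, InverseSemigroup.IsRightStrong.isLeftStrong hPM1 hPM2 h⟩
  tfae_have 2 → 3 := fun h => ⟨InverseSemigroup.IsLeftStrong.isRightStrong hPM1 hPM3 h, h⟩
  tfae_have 3 → 1 := And.left
  tfae_have 3 → 2 := And.right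
  tfae_finish
end

section
/- Let ψ: T → S be a proper morphism between restriction semigroups, let s, t ∈ S satisfy s ∼ t, and let e ∈ P(T). If e ≤ u^* and e ≤ v^* for some u, v ∈ T with ψ(u) ≤ s and ψ(v) ≤ t, then (u e)^+ = (v e)^+. (In particular this holds when ψ(u) = s and ψ(v) = t; i.e., if e lies in the domains of both ψ̂_s and ψ̂_t, or of both ψ̃_s and ψ̃_t, then the corresponding values agree.) -/
open RestrictionSemigroup

/-! Compatibility of `s` and `t` descends to `ψ u ≤ s` and `ψ v ≤ t`, so `ψ u` and `ψ v` agree on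
the common projection `ψ e`: `ψ (u e) = ψ (v e)`. Properness makes `u e` and `v e` compatible, and
two compatible elements with the same domain `(u e)^* = e = (v e)^*` are equal. -/

section RestrictionSemigroup

variable {S : Type*} [RestrictionSemigroup S]

lemma rstar_mul_rstar_self (x : S) : rstar x * rstar x = rstar x := by
  rw [← rstar_mul_rstar x x, mul_rstar_self]

lemma rstar_mul_of_rle {e x : S} (h : rle e (rstar x)) : rstar x * e = e := by
  obtain ⟨f, _, rfl⟩ := h
  rw [← mul_assoc, rstar_mul_rstar_self]

lemma rstar_mul_of_isProj_of_rle {e x : S} (he : IsProj e) (h : rle e (rstar x)) :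
    rstar (x * e) = e := by
  obtain ⟨e₀, rfl⟩ := he
  rw [rstar_mul_rstar, rstar_mul_of_rle h]

lemma rle.mul_rstar_comm {a b s t : S} (hst : s * rstar t = t * rstar s)
    (ha : rle a s) (hb : rle b t) : a * rstar b = b * rstar a := by
  obtain ⟨f, ⟨f₀, rfl⟩, rfl⟩ := ha
  obtain ⟨g, ⟨g₀, rfl⟩, rfl⟩ := hb
  rw [rstar_mul_rstar, rstar_mul_rstar]
  calc s * rstar f₀ * (rstar t * rstar g₀)
      = s * rstar t * (rstar f₀ * rstar g₀) := by
        rw [mul_assoc s, ← mul_assoc (rstar f₀), rstar_comm f₀ t]; simp only [mul_assoc]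
    _ = t * rstar s * (rstar g₀ * rstar f₀) := by rw [hst, rstar_comm]
    _ = t * rstar g₀ * (rstar s * rstar f₀) := by
        rw [mul_assoc t, ← mul_assoc (rstar s), rstar_comm s g₀]; simp only [mul_assoc]

lemma mul_eq_mul_of_mul_rstar_comm {a b e : S} (h : a * rstar b = b * rstar a)
    (ha : rstar a * e = e) (hb : rstar b * e = e) : a * e = b * e :=
  calc a * e = a * rstar b * e := by rw [mul_assoc, hb]
    _ = b * rstar a * e := by rw [h]
    _ = b * e := by rw [mul_assoc, ha]

lemma eq_of_mul_rstar_comm_of_rstar_eq {x y : S} (h : x * rstar y = y * rstar x)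
    (hxy : rstar x = rstar y) : x = y :=
  calc x = x * rstar y := by rw [← hxy, mul_rstar_self]
    _ = y * rstar x := h
    _ = y := by rw [hxy, mul_rstar_self]

end RestrictionSemigroup

theorem stmt17_general {T S : Type*} [RestrictionSemigroup T] [RestrictionSemigroup S]
    (ψ : T → S)
    (hmul : ∀ a b : T, ψ (a * b) = ψ a * ψ b)
    (hstar : ∀ a : T, ψ (rstar a) = rstar (ψ a))
    (hproper : ∀ a b : T, ψ a = ψ b → compat a b)
    (s t : S) (hst : compat s t)
    (e : T) (he : IsProj e) (u v : T)
    (hu : rle e (rstar u)) (hv : rle e (rstar v))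
    (hus : rle (ψ u) s) (hvt : rle (ψ v) t) :
    rplus (u * e) = rplus (v * e) := by
  have hψu : rstar (ψ u) * ψ e = ψ e := by rw [← hstar, ← hmul, rstar_mul_of_rle hu]
  have hψv : rstar (ψ v) * ψ e = ψ e := by rw [← hstar, ← hmul, rstar_mul_of_rle hv]
  have hψ : ψ (u * e) = ψ (v * e) := by
    rw [hmul, hmul]
    exact mul_eq_mul_of_mul_rstar_comm (hus.mul_rstar_comm hst.1 hvt) hψu hψv
  have hdom : rstar (u * e) = rstar (v * e) := by
    rw [rstar_mul_of_isProj_of_rle he hu, rstar_mul_of_isProj_of_rle he hv]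
  rw [eq_of_mul_rstar_comm_of_rstar_eq (hproper _ _ hψ).1 hdom]

theorem stmt17 {T S : Type*} [RestrictionSemigroup T] [RestrictionSemigroup S]
    (ψ : T → S) (hsurj : Function.Surjective ψ)
    (hmul : ∀ a b : T, ψ (a * b) = ψ a * ψ b)
    (hstar : ∀ a : T, ψ (rstar a) = rstar (ψ a))
    (hplus : ∀ a : T, ψ (rplus a) = rplus (ψ a))
    (hproper : ∀ a b : T, ψ a = ψ b → compat a b)
    (s t : S) (hst : compat s t)
    (e : T) (he : IsProj e) (u v : T)
    (hu : rle e (rstar u)) (hv : rle e (rstar v))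
    (hus : rle (ψ u) s) (hvt : rle (ψ v) t) :
    rplus (u * e) = rplus (v * e) :=
  stmt17_general ψ hmul hstar hproper s t hst e he u v hu hv hus hvt
end

section
/- Let ψ: T → S be a surjective morphism between restriction semigroups such that for each s ∈ S the fiber ψ⁻¹(s) has a maximum element with respect to the natural partial order of T. Then ψ is proper, i.e., ψ(u) = ψ(v) implies u ∼ v for all u, v ∈ T. -/
open RestrictionSemigroup

/-! Any two elements below a common element `m` are compatible: writing them as `m e` and `m f`
with projections `e`, `f`, both sides of each compatibility equation reduce to `m e f = m f e`.
The maximum of the fiber `ψ⁻¹(ψ u)` is such a common upper bound for `u` and any `v` in that fiber. -/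

namespace RestrictionSemigroup

variable {S : Type*} [RestrictionSemigroup S]

theorem IsProj.mul_comm {e f : S} (he : IsProj e) (hf : IsProj f) : e * f = f * e := by
  obtain ⟨a, rfl⟩ := he
  obtain ⟨b, rfl⟩ := hf
  exact rstar_comm a b

theorem IsProj.rplus_eq {e : S} (he : IsProj e) : rplus e = e := by
  obtain ⟨a, rfl⟩ := he
  exact rplus_rstar a

theorem mul_mul_rstar_mul_of_isProj (m : S) {e f : S} (he : IsProj e) (hf : IsProj f) :
    m * e * rstar (m * f) = m * (e * f) := by
  obtain ⟨b, rfl⟩ := hf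
  calc m * e * rstar (m * rstar b)
      = m * (e * rstar m) * rstar b := by rw [rstar_mul_rstar]; simp only [mul_assoc]
    _ = m * rstar m * e * rstar b := by rw [he.mul_comm ⟨m, rfl⟩]; simp only [mul_assoc]
    _ = m * (e * rstar b) := by rw [mul_rstar_self, mul_assoc]

theorem rplus_mul_mul_mul_of_isProj (m : S) {e f : S} (he : IsProj e) :
    rplus (m * e) * (m * f) = m * (e * f) := by
  rw [← mul_assoc, mul_rplus, he.rplus_eq, mul_assoc]

theorem compat_of_rle_of_rle {u v m : S} (hu : rle u m) (hv : rle v m) : compat u v := by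
  obtain ⟨e, he, rfl⟩ := hu
  obtain ⟨f, hf, rfl⟩ := hv
  refine ⟨?_, ?_⟩
  · rw [mul_mul_rstar_mul_of_isProj m he hf, mul_mul_rstar_mul_of_isProj m hf he, he.mul_comm hf]
  · rw [rplus_mul_mul_mul_of_isProj m hf, rplus_mul_mul_mul_of_isProj m he, he.mul_comm hf]

end RestrictionSemigroup

theorem stmt19_general {T S : Type*} [RestrictionSemigroup T] [RestrictionSemigroup S]
    (ψ : T → S)
    (hmax : ∀ s : S, ∃ m : T, ψ m = s ∧ ∀ u : T, ψ u = s → rle u m) :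
    ∀ u v : T, ψ u = ψ v → compat u v := by
  intro u v huv
  obtain ⟨m, -, hm⟩ := hmax (ψ u)
  exact compat_of_rle_of_rle (hm u rfl) (hm v huv.symm)

theorem stmt19 {T S : Type*} [RestrictionSemigroup T] [RestrictionSemigroup S]
    (ψ : T → S) (hsurj : Function.Surjective ψ)
    (hmul : ∀ a b : T, ψ (a * b) = ψ a * ψ b)
    (hstar : ∀ a : T, ψ (rstar a) = rstar (ψ a))
    (hplus : ∀ a : T, ψ (rplus a) = rplus (ψ a))
    (hmax : ∀ s : S, ∃ m : T, ψ m = s ∧ ∀ u : T, ψ u = s → rle u m) :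
    ∀ u v : T, ψ u = ψ v → compat u v :=
  stmt19_general ψ hmax
end
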